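/- Angle bound for subgradients of ℓp-norms: for any p ∈ [1,∞) ∪ {∞} and any z ∈ ℝ^d with ‖z‖_p = 1, every subgradient u of the ℓp-norm at z satisfies ⟨u, z⟩ / (‖u‖_2 ‖z‖_2) ≥ 1/√d; consequently the (Euclidean) angle between u and z is at most π/2 - 1/√d. -/

import Mathlib

open scoped ENNReal

noncomputable def pnorm {d : ℕ} (p : ℝ≥0∞) [Fact (1 ≤ p)] (x : Fin d → ℝ) : ℝ :=
  ‖(WithLp.equiv p (Fin d → ℝ)).symm x‖

def Hp {d : ℕ} (p : ℝ≥0∞) [Fact (1 ≤ p)] (x v : Fin d → ℝ) : Set (Fin d → ℝ) :=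
  {z | ∀ ε : ℝ, 0 < ε → pnorm p (x - z) ≤ pnorm p (x - ε • v - z)}

/-! Testing the subgradient inequality at `w = 0` and at `w = z + v` gives `⟨u, z⟩ = ‖z‖_p = 1`
and `⟨u, v⟩ ≤ ‖v‖_p` for every `v`, so the cosine is `1 / (‖u‖₂ ‖z‖₂)` and it suffices to
show `‖u‖₂ ‖z‖₂ ≤ √d`. For `p ≤ 2` we have `‖z‖₂ ≤ ‖z‖_p = 1` and `‖u‖₂ ≤ √d ‖u‖_∞ ≤ √d`
(test `v = ±eᵢ`). For `p ≥ 2`, `‖u‖₂² = ⟨u, u⟩ ≤ ‖u‖_p ≤ ‖u‖₂` gives `‖u‖₂ ≤ 1`, while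
`‖z‖₂ ≤ √d ‖z‖_p = √d`. The angle bound then follows from `x ≤ arcsin x` on `[0, 1]`. -/

open WithLp

namespace PiLp

variable {ι : Type*} [Fintype ι] {β : ι → Type*} [∀ i, SeminormedAddCommGroup (β i)]

theorem norm_toLp_le_norm_toLp_of_le {p q : ℝ≥0∞} [Fact (1 ≤ p)] (hpq : p ≤ q)
    (f : ∀ i, β i) : ‖toLp q f‖ ≤ ‖toLp p f‖ := by
  set N := ‖toLp p f‖ with hN_def
  have hfN : ∀ i, ‖f i‖ ≤ N := norm_apply_le (toLp p f)
  rcases eq_or_ne q ∞ with rfl | hq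
  · exact (norm_eq_ciSup _).trans_le (Real.iSup_le hfN (norm_nonneg _))
  have hp : p ≠ ∞ := ne_top_of_le_ne_top hq hpq
  have hs : 0 < p.toReal := ENNReal.toReal_pos (one_pos.trans_le Fact.out).ne' hp
  have hr : 0 < q.toReal := hs.trans_le (ENNReal.toReal_mono hq hpq)
  have hN : N ^ p.toReal = ∑ i, ‖f i‖ ^ p.toReal := by
    rw [hN_def, norm_eq_sum hs, one_div, Real.rpow_inv_rpow (by positivity) hs.ne']
  have hsum : ∑ i, ‖f i‖ ^ q.toReal ≤ N ^ q.toReal := calc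
    ∑ i, ‖f i‖ ^ q.toReal = ∑ i, ‖f i‖ ^ (q.toReal - p.toReal) * ‖f i‖ ^ p.toReal := by
      congr! 1 with i
      rw [← Real.rpow_add' (norm_nonneg _) (by simpa using hr.ne'), sub_add_cancel]
    _ ≤ ∑ i, N ^ (q.toReal - p.toReal) * ‖f i‖ ^ p.toReal := by
      gcongr with i
      · exact sub_nonneg.2 (ENNReal.toReal_mono hq hpq)
      · exact hfN i
    _ = N ^ q.toReal := by
      rw [← Finset.mul_sum, ← hN, ← Real.rpow_add' (norm_nonneg _) (by simpa using hr.ne'),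
        sub_add_cancel]
  rw [norm_eq_sum hr, one_div]
  calc (∑ i, ‖toLp q f i‖ ^ q.toReal) ^ q.toReal⁻¹ ≤ (N ^ q.toReal) ^ q.toReal⁻¹ := by
        gcongr
    _ = N := Real.rpow_rpow_inv (norm_nonneg _) hr.ne'

theorem norm_toLp_two_le_sqrt_card_mul_norm_toLp (p : ℝ≥0∞) [Fact (1 ≤ p)] (f : ∀ i, β i) :
    ‖toLp 2 f‖ ≤ √(Fintype.card ι) * ‖toLp p f‖ := calc
  ‖toLp 2 f‖ = √(∑ i, ‖f i‖ ^ 2) := norm_eq_of_L2 _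
  _ ≤ √(∑ _i : ι, ‖toLp p f‖ ^ 2) := by
    gcongr with i
    exact norm_apply_le (toLp p f) i
  _ = √(Fintype.card ι) * ‖toLp p f‖ := by
    rw [Finset.sum_const, Finset.card_univ, nsmul_eq_mul, Real.sqrt_mul (Nat.cast_nonneg _),
      Real.sqrt_sq (norm_nonneg _)]

end PiLp

section pnorm

variable {d : ℕ}

theorem pnorm_eq_norm_toLp (p : ℝ≥0∞) [Fact (1 ≤ p)] (x : Fin d → ℝ) :
    pnorm p x = ‖toLp p x‖ := rfl

theorem pnorm_zero (p : ℝ≥0∞) [Fact (1 ≤ p)] : pnorm p (0 : Fin d → ℝ) = 0 := by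
  rw [pnorm_eq_norm_toLp, toLp_zero, norm_zero]

theorem pnorm_add_le (p : ℝ≥0∞) [Fact (1 ≤ p)] (x y : Fin d → ℝ) :
    pnorm p (x + y) ≤ pnorm p x + pnorm p y := by
  simp only [pnorm_eq_norm_toLp, toLp_add]
  exact norm_add_le _ _

theorem pnorm_single (p : ℝ≥0∞) [Fact (1 ≤ p)] (i : Fin d) (c : ℝ) :
    pnorm p (Pi.single i c) = |c| := by
  rw [pnorm_eq_norm_toLp, PiLp.toLp_single, PiLp.norm_single, Real.norm_eq_abs]

theorem pnorm_top (x : Fin d → ℝ) : pnorm ∞ x = ‖x‖ :=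
  PiLp.norm_toLp x

theorem pnorm_two_eq_sqrt (x : Fin d → ℝ) : pnorm 2 x = √(∑ i, x i ^ 2) := by
  simp only [pnorm_eq_norm_toLp, EuclideanSpace.norm_eq, Real.norm_eq_abs, sq_abs]

theorem pnorm_le_pnorm_of_le {p q : ℝ≥0∞} [Fact (1 ≤ p)] [Fact (1 ≤ q)] (hpq : p ≤ q)
    (x : Fin d → ℝ) : pnorm q x ≤ pnorm p x :=
  PiLp.norm_toLp_le_norm_toLp_of_le hpq x

theorem pnorm_two_le_sqrt_mul_pnorm (p : ℝ≥0∞) [Fact (1 ≤ p)] (x : Fin d → ℝ) :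
    pnorm 2 x ≤ √d * pnorm p x := by
  have h := PiLp.norm_toLp_two_le_sqrt_card_mul_norm_toLp p x
  rwa [Fintype.card_fin] at h

theorem dotProduct_le_pnorm_two_mul_pnorm_two (u v : Fin d → ℝ) :
    u ⬝ᵥ v ≤ pnorm 2 u * pnorm 2 v := by
  rw [pnorm_two_eq_sqrt, pnorm_two_eq_sqrt]
  exact Real.sum_mul_le_sqrt_mul_sqrt _ u v

end pnorm

def IsSubgradient {ι : Type*} [Fintype ι] (f : (ι → ℝ) → ℝ) (x u : ι → ℝ) : Prop :=
  ∀ w, u ⬝ᵥ (w - x) ≤ f w - f x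

namespace IsSubgradient

variable {d : ℕ} {p : ℝ≥0∞} [Fact (1 ≤ p)] {z u : Fin d → ℝ}

theorem dotProduct_le (hu : IsSubgradient (pnorm p) z u) (w : Fin d → ℝ) :
    u ⬝ᵥ w ≤ pnorm p w := by
  have h := hu (z + w)
  rw [add_sub_cancel_left] at h
  linarith [pnorm_add_le p z w]

theorem dotProduct_self_eq (hu : IsSubgradient (pnorm p) z u) : u ⬝ᵥ z = pnorm p z := by
  have h := hu 0
  rw [zero_sub, dotProduct_neg, pnorm_zero] at h
  linarith [hu.dotProduct_le z]

theorem pnorm_top_le_one (hu : IsSubgradient (pnorm p) z u) : pnorm ∞ u ≤ 1 := by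
  rw [pnorm_top, pi_norm_le_iff_of_nonneg zero_le_one]
  intro i
  have h₁ := hu.dotProduct_le (Pi.single i 1)
  have h₂ := hu.dotProduct_le (Pi.single i (-1))
  rw [dotProduct_single, pnorm_single] at h₁ h₂
  rw [Real.norm_eq_abs, abs_le]
  constructor <;> norm_num at h₁ h₂ <;> linarith

theorem pnorm_two_le_one (hu : IsSubgradient (pnorm p) z u) (hp : 2 ≤ p) : pnorm 2 u ≤ 1 := by
  have hsq : pnorm 2 u ^ 2 ≤ pnorm 2 u := calc
    pnorm 2 u ^ 2 = u ⬝ᵥ u := by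
      rw [pnorm_two_eq_sqrt, Real.sq_sqrt (by positivity)]
      simp only [dotProduct, sq]
    _ ≤ pnorm p u := hu.dotProduct_le u
    _ ≤ pnorm 2 u := pnorm_le_pnorm_of_le hp u
  nlinarith

theorem pnorm_two_mul_pnorm_two_le_sqrt (hu : IsSubgradient (pnorm p) z u) (hz : pnorm p z = 1) :
    pnorm 2 u * pnorm 2 z ≤ √d := by
  rcases le_total p 2 with hp | hp
  · have hu₂ : pnorm 2 u ≤ √d := calc
      pnorm 2 u ≤ √d * pnorm ∞ u := pnorm_two_le_sqrt_mul_pnorm ∞ u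
      _ ≤ √d := mul_le_of_le_one_right (Real.sqrt_nonneg _) hu.pnorm_top_le_one
    have hz₂ : pnorm 2 z ≤ 1 := hz ▸ pnorm_le_pnorm_of_le hp z
    simpa using mul_le_mul hu₂ hz₂ (norm_nonneg _) (Real.sqrt_nonneg _)
  · have hz₂ : pnorm 2 z ≤ √d := by simpa [hz] using pnorm_two_le_sqrt_mul_pnorm p z
    simpa using mul_le_mul (hu.pnorm_two_le_one hp) hz₂ (norm_nonneg _) zero_le_one

end IsSubgradient

theorem Real.arccos_le_pi_div_two_sub_of_le {a x : ℝ} (ha₀ : 0 ≤ a) (ha₁ : a ≤ 1) (hax : a ≤ x) :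
    Real.arccos x ≤ Real.pi / 2 - a := calc
  Real.arccos x ≤ Real.arccos a := Real.arccos_le_arccos hax
  _ = Real.pi / 2 - Real.arcsin a := Real.arccos_eq_pi_div_two_sub_arcsin a
  _ ≤ Real.pi / 2 - a := by
    gcongr
    calc a = Real.sin (Real.arcsin a) := (Real.sin_arcsin (by linarith) ha₁).symm
      _ ≤ Real.arcsin a := Real.sin_le (Real.arcsin_nonneg.2 ha₀)

theorem subgradient_angle_bound {d : ℕ} (p : ℝ≥0∞) [Fact (1 ≤ p)]
    (z : Fin d → ℝ) (hz : pnorm p z = 1) (u : Fin d → ℝ)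
    (hu : ∀ w : Fin d → ℝ, ∑ i, u i * (w i - z i) ≤ pnorm p w - pnorm p z) :
    1 / Real.sqrt d ≤ (∑ i, u i * z i) / (pnorm 2 u * pnorm 2 z) ∧
      Real.arccos ((∑ i, u i * z i) / (pnorm 2 u * pnorm 2 z)) ≤
        Real.pi / 2 - 1 / Real.sqrt d := by
  have hsub : IsSubgradient (pnorm p) z u := hu
  have hinner : ∑ i, u i * z i = 1 := hsub.dotProduct_self_eq.trans hz
  have hcs : 1 ≤ pnorm 2 u * pnorm 2 z :=
    hinner.symm.trans_le (dotProduct_le_pnorm_two_mul_pnorm_two u z)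
  have hlow : 1 / √d ≤ 1 / (pnorm 2 u * pnorm 2 z) :=
    one_div_le_one_div_of_le (one_pos.trans_le hcs) (hsub.pnorm_two_mul_pnorm_two_le_sqrt hz)
  have hlow₁ : 1 / √d ≤ 1 := hlow.trans (div_le_one_of_le₀ hcs (zero_le_one.trans hcs))
  rw [hinner]
  exact ⟨hlow, Real.arccos_le_pi_div_two_sub_of_le (by positivity) hlow₁ hlow⟩
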